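/- Let F be a d × n matrix of full row rank with smallest singular value σ_min(F) and largest singular value σ_max(F), let W* be a symmetric d × d matrix of rank at most r, and let E be an n × n matrix with at most z nonzeros per row and per column. Let G = F† be the pseudoinverse and W = P_r(Gᵀ(FᵀW*F + E)G). Then ‖W* − W‖₂ ≤ 2z‖E‖∞ / σ_min(F)². -/

import Mathlib

open Matrix

noncomputable def specNorm {m n : Type*} [Fintype m] [Fintype n] [DecidableEq n]
    (A : Matrix m n ℝ) : ℝ :=
  ‖LinearMap.toContinuousLinearMap (toEuclideanLin A)‖

noncomputable def infNorm {m n : Type*} [Fintype m] [Fintype n] (A : Matrix m n ℝ) : ℝ :=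
  ⨆ i, ⨆ j, |A i j|

noncomputable def nnzRow {m n : Type*} [Fintype n] (A : Matrix m n ℝ) (i : m) : ℕ :=
  (Finset.univ.filter fun j => A i j ≠ 0).card

noncomputable def nnzCol {m n : Type*} [Fintype m] (A : Matrix m n ℝ) (j : n) : ℕ :=
  (Finset.univ.filter fun i => A i j ≠ 0).card

noncomputable def hardThresh {m n : Type*} (a : ℝ) (A : Matrix m n ℝ) : Matrix m n ℝ :=
  Matrix.of fun i j => if a < |A i j| then A i j else 0

noncomputable def sigmaMin {d n : Type*} [Fintype d] [Fintype n] [DecidableEq d]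
    (F : Matrix d n ℝ) : ℝ :=
  sInf ((fun y : EuclideanSpace ℝ d => ‖toEuclideanLin Fᵀ y‖) '' {y | ‖y‖ = 1})

noncomputable def pinv {d n : Type*} [Fintype d] [Fintype n] [DecidableEq d]
    (F : Matrix d n ℝ) : Matrix n d ℝ :=
  Fᵀ * (F * Fᵀ)⁻¹

def IsTruncatedEigen {d : ℕ} (r : ℕ) (A B : Matrix (Fin d) (Fin d) ℝ) : Prop :=
  ∃ (Q : Matrix (Fin d) (Fin r) ℝ) (Λ : Fin r → ℝ)
    (Qp : Matrix (Fin d) (Fin (d - r)) ℝ) (Λp : Fin (d - r) → ℝ),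
    Qᵀ * Q = 1 ∧ Qpᵀ * Qp = 1 ∧ Qᵀ * Qp = 0 ∧
    A = Q * diagonal Λ * Qᵀ + Qp * diagonal Λp * Qpᵀ ∧
    B = Q * diagonal Λ * Qᵀ ∧
    ∀ i j, |Λp j| ≤ |Λ i|

def symEmb {n₁ n₂ : Type*} (M : Matrix n₁ n₂ ℝ) : Matrix (n₁ ⊕ n₂) (n₁ ⊕ n₂) ℝ :=
  Matrix.fromBlocks 0 M Mᵀ 0

/-!
Put `G = pinv F`. Full row rank gives `F * G = 1`, so `Gᵀ (Fᵀ W* F + E) G = W* + N` with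
`N = Gᵀ E G`. As `rank W* ≤ r`, the span of the `r` kept eigenvectors and any one discarded
eigenvector contains a unit vector `x` with `W* x = 0`; there `N x = (W* + N) x`, whose norm is at
least the discarded eigenvalue. So every discarded eigenvalue is at most `‖N‖` in absolute value,
and `‖W* - W‖ ≤ ‖Qp Λp Qpᵀ‖ + ‖N‖ ≤ 2 ‖N‖`. Finally `‖N‖ ≤ ‖G‖² ‖E‖`, where
`‖G‖ ≤ 1 / σ_min(F)` because `‖G x‖² = ⟪(F Fᵀ)⁻¹ x, x⟫`, and the Schur test bounds `‖E‖` by its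
largest absolute row and column sums, each at most `z ‖E‖∞`.
-/

open scoped Finset Matrix.Norms.L2Operator RealInnerProductSpace

section Sparse

variable {ι m n : Type*} [Fintype ι] [Fintype m] [Fintype n]

theorem sum_abs_le_card_support_mul {f : ι → ℝ} {c : ℝ} (hf : ∀ i, |f i| ≤ c) :
    ∑ i, |f i| ≤ #{i | f i ≠ 0} * c := by
  calc ∑ i, |f i| = ∑ i with f i ≠ 0, |f i| :=
        (Finset.sum_filter_of_ne fun i _ h => abs_ne_zero.mp h).symm
    _ ≤ #{i | f i ≠ 0} • c := Finset.sum_le_card_nsmul _ _ _ fun i _ => hf i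
    _ = #{i | f i ≠ 0} * c := nsmul_eq_mul _ _

theorem infNorm_nonneg (A : Matrix m n ℝ) : 0 ≤ infNorm A :=
  Real.iSup_nonneg fun _ => Real.iSup_nonneg fun _ => abs_nonneg _

theorem abs_le_infNorm (A : Matrix m n ℝ) (i : m) (j : n) : |A i j| ≤ infNorm A :=
  (le_ciSup (Set.finite_range _).bddAbove j).trans
    (le_ciSup (f := fun i => ⨆ j, |A i j|) (Set.finite_range _).bddAbove i)

theorem Matrix.l2_opNorm_le_of_sum_abs_le [DecidableEq n] (A : Matrix m n ℝ) {c : ℝ}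
    (hc : 0 ≤ c) (hrow : ∀ i, ∑ j, |A i j| ≤ c) (hcol : ∀ j, ∑ i, |A i j| ≤ c) : ‖A‖ ≤ c := by
  rw [l2_opNorm_def]
  refine ContinuousLinearMap.opNorm_le_bound _ hc fun x => ?_
  change ‖toEuclideanLin A x‖ ≤ c * ‖x‖
  refine (sq_le_sq₀ (norm_nonneg _) (by positivity)).mp ?_
  have hrow_cs : ∀ i, (A *ᵥ x.ofLp) i ^ 2 ≤ c * ∑ j, |A i j| * x j ^ 2 := fun i =>
    calc (A *ᵥ x.ofLp) i ^ 2 ≤ (∑ j, |A i j| * |x j|) ^ 2 := by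
          rw [← sq_abs]
          gcongr
          calc |(A *ᵥ x.ofLp) i| = |∑ j, A i j * x j| := rfl
            _ ≤ ∑ j, |A i j * x j| := Finset.abs_sum_le_sum_abs _ _
            _ = ∑ j, |A i j| * |x j| := by simp only [abs_mul]
      _ ≤ (∑ j, |A i j|) * ∑ j, |A i j| * x j ^ 2 :=
          Finset.sum_sq_le_sum_mul_sum_of_sq_le_mul _ (fun _ _ => abs_nonneg _)
            (fun _ _ => by positivity) fun j _ => by
              rw [mul_pow, sq_abs (x j), ← mul_assoc, ← sq]
      _ ≤ c * ∑ j, |A i j| * x j ^ 2 := by gcongr; exact hrow i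
  calc ‖toEuclideanLin A x‖ ^ 2 = ∑ i, (A *ᵥ x.ofLp) i ^ 2 := EuclideanSpace.real_norm_sq_eq _
    _ ≤ ∑ i, c * ∑ j, |A i j| * x j ^ 2 := Finset.sum_le_sum fun i _ => hrow_cs i
    _ = c * ∑ j, (∑ i, |A i j|) * x j ^ 2 := by
        rw [← Finset.mul_sum, Finset.sum_comm]
        simp only [Finset.sum_mul]
    _ ≤ c * ∑ j, c * x j ^ 2 := by gcongr with j; exact hcol j
    _ = (c * ‖x‖) ^ 2 := by
        rw [mul_pow, EuclideanSpace.real_norm_sq_eq, ← Finset.mul_sum, sq, mul_assoc]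

theorem Matrix.l2_opNorm_le_nnz_mul_infNorm [DecidableEq n] (A : Matrix m n ℝ) {z : ℕ}
    (hrow : ∀ i, nnzRow A i ≤ z) (hcol : ∀ j, nnzCol A j ≤ z) : ‖A‖ ≤ z * infNorm A := by
  refine A.l2_opNorm_le_of_sum_abs_le (by have := infNorm_nonneg A; positivity)
    (fun i => ?_) fun j => ?_
  · refine (sum_abs_le_card_support_mul (abs_le_infNorm A i)).trans ?_
    gcongr
    · exact infNorm_nonneg A
    · exact_mod_cast hrow i
  · refine (sum_abs_le_card_support_mul (abs_le_infNorm A · j)).trans ?_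
    gcongr
    · exact infNorm_nonneg A
    · exact_mod_cast hcol j

end Sparse

section PseudoInverse

variable {m d n : Type*} [Fintype m] [Fintype d] [Fintype n] [DecidableEq d]

theorem Matrix.norm_toEuclideanLin_le [DecidableEq n] (A : Matrix m n ℝ)
    (x : EuclideanSpace ℝ n) : ‖toEuclideanLin A x‖ ≤ ‖A‖ * ‖x‖ :=
  A.l2_opNorm_mulVec x

theorem Matrix.l2_opNorm_transpose [DecidableEq n] (A : Matrix d n ℝ) : ‖Aᵀ‖ = ‖A‖ := by
  rw [← conjTranspose_eq_transpose_of_trivial, l2_opNorm_conjTranspose]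

theorem Matrix.inner_toEuclideanLin_transpose [DecidableEq n] (A : Matrix d n ℝ)
    (y : EuclideanSpace ℝ d) (x : EuclideanSpace ℝ n) :
    ⟪toEuclideanLin Aᵀ y, x⟫ = ⟪y, toEuclideanLin A x⟫ := by
  rw [← conjTranspose_eq_transpose_of_trivial,
    toEuclideanLin_conjTranspose_eq_adjoint, LinearMap.adjoint_inner_left]

theorem mul_pinv_of_rank_eq {F : Matrix d n ℝ} (h : F.rank = Fintype.card d) :
    F * pinv F = 1 := by
  have hunit : IsUnit (F * Fᵀ) := by
    have hrange : LinearMap.range (F * Fᵀ).mulVecLin = ⊤ :=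
      Submodule.eq_top_of_finrank_eq <| by
        rw [← rank, rank_self_mul_transpose, h, Module.finrank_fintype_fun_eq_card]
    exact mulVec_surjective_iff_isUnit.mp (LinearMap.range_eq_top.mp hrange)
  rw [pinv, ← Matrix.mul_assoc, mul_nonsing_inv _ ((isUnit_iff_isUnit_det _).mp hunit)]

theorem Matrix.transpose_mul_add_mul_of_mul_eq_one {R : Type*} [CommRing R] {F : Matrix d n R}
    {G : Matrix n d R} (h : F * G = 1) (M : Matrix d d R) (E : Matrix n n R) :
    Gᵀ * (Fᵀ * M * F + E) * G = M + Gᵀ * E * G := by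
  have hGF : Gᵀ * Fᵀ = 1 := by rw [← Matrix.transpose_mul, h, transpose_one]
  simp only [Matrix.mul_add, Matrix.add_mul, ← Matrix.mul_assoc, hGF, Matrix.one_mul]
  rw [Matrix.mul_assoc M, h, Matrix.mul_one]

theorem sigmaMin_mul_norm_le (F : Matrix d n ℝ) (y : EuclideanSpace ℝ d) :
    sigmaMin F * ‖y‖ ≤ ‖toEuclideanLin Fᵀ y‖ := by
  rcases eq_or_ne y 0 with rfl | hy
  · simp
  have hy' : 0 < ‖y‖ := norm_pos_iff.2 hy
  have hσ : sigmaMin F ≤ ‖toEuclideanLin Fᵀ (‖y‖⁻¹ • y)‖ :=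
    csInf_le ⟨0, by rintro _ ⟨_, _, rfl⟩; exact norm_nonneg _⟩ ⟨_, norm_smul_inv_norm hy, rfl⟩
  rwa [map_smul, norm_smul, norm_inv, norm_norm, inv_mul_eq_div, le_div_iff₀ hy'] at hσ

theorem inv_l2_opNorm_le_sigmaMin [DecidableEq n] [Nonempty d] {F : Matrix d n ℝ}
    {G : Matrix n d ℝ} (h : F * G = 1) : ‖G‖⁻¹ ≤ sigmaMin F := by
  have hsphere : {y : EuclideanSpace ℝ d | ‖y‖ = 1}.Nonempty :=
    ⟨EuclideanSpace.single (Classical.arbitrary d) 1, by simp⟩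
  refine le_csInf (hsphere.image _) ?_
  rintro _ ⟨y, hy, rfl⟩
  have hy1 : 1 ≤ ‖G‖ * ‖toEuclideanLin Fᵀ y‖ :=
    calc 1 = ‖toEuclideanLin (Gᵀ * Fᵀ) y‖ := by
          rw [← Matrix.transpose_mul, h, transpose_one, toLpLin_one]; exact hy.symm
      _ ≤ ‖G‖ * ‖toEuclideanLin Fᵀ y‖ := by
          rw [toLpLin_mul_same, LinearMap.comp_apply, ← G.l2_opNorm_transpose]
          exact Gᵀ.norm_toEuclideanLin_le _
  have hG : 0 < ‖G‖ := (norm_nonneg G).lt_of_ne fun h0 => by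
    rw [← h0, zero_mul] at hy1
    linarith
  rwa [inv_le_iff_one_le_mul₀ hG, mul_comm]

theorem sigmaMin_pos [DecidableEq n] [Nonempty d] {F : Matrix d n ℝ} {G : Matrix n d ℝ}
    (h : F * G = 1) : 0 < sigmaMin F := by
  have hG : G ≠ 0 := by rintro rfl; simp at h
  exact (inv_pos.2 (norm_pos_iff.2 hG)).trans_le (inv_l2_opNorm_le_sigmaMin h)

theorem l2_opNorm_pinv_le [DecidableEq n] {F : Matrix d n ℝ} (h : F * pinv F = 1)
    (hσ : 0 < sigmaMin F) : ‖pinv F‖ ≤ (sigmaMin F)⁻¹ := by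
  rw [l2_opNorm_def]
  refine ContinuousLinearMap.opNorm_le_bound _ (inv_nonneg.2 hσ.le) fun x => ?_
  change ‖toEuclideanLin (pinv F) x‖ ≤ _
  set u := toEuclideanLin (F * Fᵀ)⁻¹ x
  set g := ‖toEuclideanLin (pinv F) x‖ with hg_def
  have hGx : toEuclideanLin (pinv F) x = toEuclideanLin Fᵀ u := by simp [pinv, u]
  have hsq : g ^ 2 = ⟪u, x⟫ := by
    rw [← real_inner_self_eq_norm_sq]
    nth_rw 1 [hGx]
    rw [inner_toEuclideanLin_transpose, ← LinearMap.comp_apply, ← toLpLin_mul_same,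
      h, toLpLin_one, LinearMap.id_apply]
  have hu : sigmaMin F * ‖u‖ ≤ g := by rw [hg_def, hGx]; exact sigmaMin_mul_norm_le F u
  rw [← div_eq_inv_mul, le_div_iff₀' hσ]
  by_cases hg : g = 0
  · rw [hg, mul_zero]; exact norm_nonneg x
  refine le_of_mul_le_mul_right ?_ ((norm_nonneg _).lt_of_ne' hg)
  nlinarith [real_inner_le_norm u x, norm_nonneg x]

end PseudoInverse

section LowRankPerturbation

variable {ι κ ρ τ : Type*}

theorem Matrix.exists_mulVec_eq_zero_of_rank_lt [Fintype κ] {K : Type*} [Field K]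
    (M : Matrix ι κ K) (h : M.rank < Fintype.card κ) : ∃ v ≠ 0, M *ᵥ v = 0 := by
  by_contra! hinj
  refine h.ne ?_
  rw [rank, LinearMap.finrank_range_of_inj, Module.finrank_fintype_fun_eq_card]
  refine (injective_iff_map_eq_zero _).2 fun v hv => ?_
  by_contra hv0
  exact hinj v hv0 hv

theorem Matrix.norm_toEuclideanLin_of_transpose_mul_self [Fintype ι] [Fintype κ] [DecidableEq ι]
    [DecidableEq κ] {P : Matrix ι κ ℝ} (hP : Pᵀ * P = 1) (v : EuclideanSpace ℝ κ) :
    ‖toEuclideanLin P v‖ = ‖v‖ := by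
  refine (sq_eq_sq₀ (norm_nonneg _) (norm_nonneg _)).1 ?_
  rw [← real_inner_self_eq_norm_sq, ← real_inner_self_eq_norm_sq,
    ← inner_toEuclideanLin_transpose, ← LinearMap.comp_apply, ← toLpLin_mul_same,
    hP, toLpLin_one, LinearMap.id_apply]

theorem Matrix.l2_opNorm_le_one_of_transpose_mul_self [Fintype ι] [Fintype κ] [DecidableEq ι]
    [DecidableEq κ] {P : Matrix ι κ ℝ} (hP : Pᵀ * P = 1) : ‖P‖ ≤ 1 := by
  rw [l2_opNorm_def]
  refine ContinuousLinearMap.opNorm_le_bound _ zero_le_one fun v => ?_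
  rw [one_mul]
  exact (norm_toEuclideanLin_of_transpose_mul_self hP v).le

theorem Matrix.mul_norm_le_norm_toEuclideanLin_diagonal [Fintype κ] [DecidableEq κ]
    {μ : κ → ℝ} {b : ℝ} (hb : ∀ k, b ≤ |μ k|) (v : EuclideanSpace ℝ κ) :
    b * ‖v‖ ≤ ‖toEuclideanLin (diagonal μ) v‖ := by
  rcases lt_or_ge b 0 with hb0 | hb0
  · exact (mul_nonpos_of_nonpos_of_nonneg hb0.le (norm_nonneg _)).trans (norm_nonneg _)
  refine (sq_le_sq₀ (by positivity) (norm_nonneg _)).mp ?_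
  rw [mul_pow, EuclideanSpace.real_norm_sq_eq, EuclideanSpace.real_norm_sq_eq, Finset.mul_sum]
  gcongr with k
  simp only [toLpLin_apply, mulVec_diagonal, mul_pow]
  refine mul_le_mul_of_nonneg_right ?_ (sq_nonneg _)
  rw [← sq_abs (μ k)]
  exact pow_le_pow_left₀ hb0 (hb k) 2

theorem Matrix.le_l2_opNorm_sub_of_rank_lt [Fintype ι] [Fintype κ] [DecidableEq ι]
    [DecidableEq κ] {A W : Matrix ι ι ℝ} {P : Matrix ι κ ℝ} {μ : κ → ℝ} {b : ℝ}
    (hP : Pᵀ * P = 1) (hAP : A * P = P * diagonal μ) (hb : ∀ k, b ≤ |μ k|)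
    (hW : W.rank < Fintype.card κ) : b ≤ ‖A - W‖ := by
  obtain ⟨v, hv0, hWPv⟩ :=
    (W * P).exists_mulVec_eq_zero_of_rank_lt ((rank_mul_le_left W P).trans_lt hW)
  set x : EuclideanSpace ℝ κ := WithLp.toLp 2 v
  have hx : 0 < ‖x‖ := norm_pos_iff.2 (by simpa [x] using hv0)
  have hWPx : toEuclideanLin (W * P) x = 0 := by
    simp only [x, toLpLin_toLp, toLin'_apply, hWPv, WithLp.toLp_zero]
  refine le_of_mul_le_mul_right ?_ hx
  calc b * ‖x‖ ≤ ‖toEuclideanLin (diagonal μ) x‖ :=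
        mul_norm_le_norm_toEuclideanLin_diagonal hb x
    _ = ‖toEuclideanLin ((A - W) * P) x‖ := by
        rw [Matrix.sub_mul, map_sub, LinearMap.sub_apply, hWPx, sub_zero, hAP,
          toLpLin_mul_same, LinearMap.comp_apply,
          norm_toEuclideanLin_of_transpose_mul_self hP]
    _ ≤ ‖A - W‖ * ‖x‖ := by
        rw [toLpLin_mul_same, LinearMap.comp_apply,
          ← norm_toEuclideanLin_of_transpose_mul_self hP x]
        exact norm_toEuclideanLin_le _ _

theorem Matrix.fromCols_transpose_mul_fromCols [Fintype ι] [DecidableEq ρ] [DecidableEq τ]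
    {Q : Matrix ι ρ ℝ} {Qp : Matrix ι τ ℝ} (hQ : Qᵀ * Q = 1) (hQp : Qpᵀ * Qp = 1)
    (hQQp : Qᵀ * Qp = 0) : (fromCols Q Qp)ᵀ * fromCols Q Qp = 1 := by
  have hQpQ : Qpᵀ * Q = 0 := by simpa using congrArg Matrix.transpose hQQp
  rw [transpose_fromCols, fromRows_mul_fromCols, hQ, hQp, hQQp, hQpQ, fromBlocks_one]

theorem Matrix.mul_fromCols_of_eq_add [Fintype ι] [Fintype ρ] [Fintype τ] [DecidableEq ρ]
    [DecidableEq τ] {A : Matrix ι ι ℝ} {Q : Matrix ι ρ ℝ} {Qp : Matrix ι τ ℝ}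
    {Λ : ρ → ℝ} {Λp : τ → ℝ} (hQ : Qᵀ * Q = 1) (hQp : Qpᵀ * Qp = 1) (hQQp : Qᵀ * Qp = 0)
    (hA : A = Q * diagonal Λ * Qᵀ + Qp * diagonal Λp * Qpᵀ) :
    A * fromCols Q Qp = fromCols Q Qp * diagonal (Sum.elim Λ Λp) := by
  have hA' : A = fromCols Q Qp * diagonal (Sum.elim Λ Λp) * (fromCols Q Qp)ᵀ := by
    rw [hA, ← fromBlocks_diagonal, fromCols_mul_fromBlocks, transpose_fromCols,
      fromCols_mul_fromRows]
    simp
  rw [hA', Matrix.mul_assoc, fromCols_transpose_mul_fromCols hQ hQp hQQp, Matrix.mul_one]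

theorem Matrix.abs_le_l2_opNorm_of_eq_add [Fintype ι] [Fintype ρ] [Fintype τ] [DecidableEq ι]
    [DecidableEq ρ] [DecidableEq τ] {M N : Matrix ι ι ℝ} (hM : M.rank ≤ Fintype.card ρ)
    {Q : Matrix ι ρ ℝ} {Qp : Matrix ι τ ℝ} {Λ : ρ → ℝ} {Λp : τ → ℝ}
    (hQ : Qᵀ * Q = 1) (hQp : Qpᵀ * Qp = 1) (hQQp : Qᵀ * Qp = 0)
    (hA : M + N = Q * diagonal Λ * Qᵀ + Qp * diagonal Λp * Qpᵀ)
    (hdom : ∀ i j, |Λp j| ≤ |Λ i|) (j : τ) : |Λp j| ≤ ‖N‖ := by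
  set U := fromCols Q Qp
  set e : ρ ⊕ Unit → ρ ⊕ τ := Sum.map id fun _ => j
  have he : Function.Injective e := Function.injective_id.sumMap fun _ _ _ => rfl
  have hAU : (M + N) * U = U * diagonal (Sum.elim Λ Λp) :=
    mul_fromCols_of_eq_add hQ hQp hQQp hA
  have hP : (U.submatrix id e)ᵀ * U.submatrix id e = 1 := by
    rw [transpose_submatrix, ← submatrix_mul _ _ _ _ _ Function.bijective_id,
      fromCols_transpose_mul_fromCols hQ hQp hQQp, submatrix_one _ he]
  have hAP :
      (M + N) * U.submatrix id e = U.submatrix id e * diagonal (Sum.elim Λ Λp ∘ e) := by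
    ext i k
    have hik := congrFun (congrFun hAU i) (e k)
    rw [mul_diagonal] at hik ⊢
    simpa only [mul_apply, submatrix_apply, id, Function.comp_apply] using hik
  have hrank : M.rank < Fintype.card (ρ ⊕ Unit) := by
    simp only [Fintype.card_sum, Fintype.card_unit]
    omega
  simpa using le_l2_opNorm_sub_of_rank_lt hP hAP (b := |Λp j|)
    (by rintro (i | _); exacts [hdom i j, le_rfl]) hrank

end LowRankPerturbation

theorem l2_opNorm_sub_le_two_mul_of_isTruncatedEigen {d r : ℕ}
    {M N W : Matrix (Fin d) (Fin d) ℝ} (hM : M.rank ≤ r) (h : IsTruncatedEigen r (M + N) W) :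
    ‖M - W‖ ≤ 2 * ‖N‖ := by
  obtain ⟨Q, Λ, Qp, Λp, hQ, hQp, hQQp, hA, rfl, hdom⟩ := h
  have htail : ‖Λp‖ ≤ ‖N‖ := (pi_norm_le_iff_of_nonneg (norm_nonneg _)).2 fun j =>
    abs_le_l2_opNorm_of_eq_add (by simpa using hM) hQ hQp hQQp hA hdom j
  have hQp1 : ‖Qp‖ ≤ 1 := l2_opNorm_le_one_of_transpose_mul_self hQp
  have hsplit : M - Q * diagonal Λ * Qᵀ = Qp * diagonal Λp * Qpᵀ - N := by
    rw [sub_eq_sub_iff_add_eq_add, hA, add_comm]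
  calc ‖M - Q * diagonal Λ * Qᵀ‖ = ‖Qp * diagonal Λp * Qpᵀ - N‖ := by rw [hsplit]
    _ ≤ ‖Qp‖ * ‖Λp‖ * ‖Qp‖ + ‖N‖ := by
        grw [norm_sub_le, l2_opNorm_mul, l2_opNorm_mul, l2_opNorm_diagonal,
          l2_opNorm_transpose]
    _ ≤ 1 * ‖N‖ * 1 + ‖N‖ := by gcongr
    _ = 2 * ‖N‖ := by ring

theorem stmt12_general {d n r z : ℕ} (F : Matrix (Fin d) (Fin n) ℝ) (hrk : F.rank = d)
    (Wstar W : Matrix (Fin d) (Fin d) ℝ) (hWr : Wstar.rank ≤ r)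
    (E : Matrix (Fin n) (Fin n) ℝ)
    (hrow : ∀ i, nnzRow E i ≤ z) (hcol : ∀ j, nnzCol E j ≤ z)
    (hW : IsTruncatedEigen r ((pinv F)ᵀ * (Fᵀ * Wstar * F + E) * pinv F) W) :
    specNorm (Wstar - W) ≤ 2 * (z : ℝ) * infNorm E / sigmaMin F ^ 2 := by
  rcases isEmpty_or_nonempty (Fin d) with hd | hd
  · rw [Subsingleton.elim (Wstar - W) 0]
    have := infNorm_nonneg E
    simp only [specNorm, map_zero, norm_zero]
    positivity
  set G := pinv F
  have hFG : F * G = 1 := mul_pinv_of_rank_eq (by rwa [Fintype.card_fin])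
  have hσ : 0 < sigmaMin F := sigmaMin_pos hFG
  rw [transpose_mul_add_mul_of_mul_eq_one hFG] at hW
  -- `specNorm` is definitionally the `L2Operator` norm
  calc specNorm (Wstar - W) ≤ 2 * ‖Gᵀ * E * G‖ :=
        l2_opNorm_sub_le_two_mul_of_isTruncatedEigen hWr hW
    _ ≤ 2 * (‖G‖ * ‖E‖ * ‖G‖) := by
        grw [l2_opNorm_mul, l2_opNorm_mul, l2_opNorm_transpose]
    _ ≤ 2 * ((sigmaMin F)⁻¹ * (z * infNorm E) * (sigmaMin F)⁻¹) := by
        have hG := l2_opNorm_pinv_le hFG hσ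
        have hE := E.l2_opNorm_le_nnz_mul_infNorm hrow hcol
        have := infNorm_nonneg E
        gcongr
    _ = 2 * z * infNorm E / sigmaMin F ^ 2 := by field_simp

theorem stmt12 {d n r z : ℕ} (F : Matrix (Fin d) (Fin n) ℝ) (hrk : F.rank = d)
    (Wstar W : Matrix (Fin d) (Fin d) ℝ) (hWs : Wstar.IsSymm) (hWr : Wstar.rank ≤ r)
    (E : Matrix (Fin n) (Fin n) ℝ)
    (hrow : ∀ i, nnzRow E i ≤ z) (hcol : ∀ j, nnzCol E j ≤ z)
    (hW : IsTruncatedEigen r ((pinv F)ᵀ * (Fᵀ * Wstar * F + E) * pinv F) W) :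
    specNorm (Wstar - W) ≤ 2 * (z : ℝ) * infNorm E / sigmaMin F ^ 2 :=
  stmt12_general F hrk Wstar W hWr E hrow hcol hW
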